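/- arXiv:2102.09031 — 3 statements merged into one kernel-verified Lean document; each statement's English description precedes it below -/
import Mathlib

section
/- Suppose real numbers (η_t) satisfy m/t ≤ η_t ≤ M/t for all 1 ≤ t ≤ T with 0 < m ≤ M, and let c = τμm > 1 for constants τ, μ > 0. Then Σ_{t=1}^{T} η_t² exp(-τμ Σ_{u=t+1}^{T} η_u) ≤ (M² exp(c)/(c-1)) · ((T+1)^{c-1} + c - 2)/(T+1)^c. -/
/-!
Write `c = τ μ m`. Since `η u ≥ m / u`, the harmonic tail gives
`τ μ ∑_{u>t} η u ≥ c (log (T + 1) - log t - 1)`, so the exponential weight is at most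
`e^c t^c / (T + 1)^c`. Together with `η t² ≤ M² / t²` the sum is bounded by
`M² e^c / (T + 1)^c · ∑_{t ≤ T} t^(c - 2)`; as `x ↦ x^(c - 2)` is monotone or antitone on
`[1, ∞)`, this power sum is at most `1 + ∫₁^{T+1} x^(c - 2) dx`.
-/

open Finset Real

theorem log_sub_log_sub_one_le_sum_Icc_inv {t T : ℕ} (ht : 1 ≤ t) (htT : t ≤ T) :
    log (T + 1) - log t - 1 ≤ ∑ u ∈ Icc (t + 1) T, (u : ℝ)⁻¹ := by
  have ht' : (1 : ℝ) ≤ t := by exact_mod_cast ht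
  have hintegral : log ((T + 1) / (t + 1)) ≤ ∑ u ∈ Icc (t + 1) T, (u : ℝ)⁻¹ := by
    have hanti : AntitoneOn (fun x : ℝ => x⁻¹) (Set.Icc ((t + 1 : ℕ) : ℝ) ((T + 1 : ℕ) : ℝ)) :=
      fun x hx y _ hxy => inv_anti₀ (by push_cast at hx; linarith [hx.1]) hxy
    have := hanti.integral_le_sum_Ico (by omega)
    rw [Ico_add_one_right_eq_Icc] at this
    push_cast at this
    rwa [integral_inv_of_pos (by positivity) (by positivity)] at this
  have hlog : log (t + 1) ≤ log t + 1 :=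
    calc log (t + 1) ≤ log (2 * t) := log_le_log (by positivity) (by linarith)
      _ = log 2 + log t := log_mul two_ne_zero (by positivity)
      _ ≤ log t + 1 := by linarith [log_two_lt_d9]
  rw [log_div (by positivity) (by positivity)] at hintegral
  linarith

theorem AntitoneOn.sum_Icc_le_add_integral {f : ℝ → ℝ} {a b : ℕ} (hab : a ≤ b)
    (hf : AntitoneOn f (Set.Icc a b)) :
    ∑ i ∈ Icc a b, f i ≤ f a + ∫ x in a..b, f x := by
  rw [← sum_Ioc_add_eq_sum_Icc hab, ← Ico_add_one_add_one_eq_Ioc, ← sum_Ico_add', add_comm]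
  gcongr
  exact hf.sum_le_integral_Ico hab

theorem sum_Icc_rpow_le_one_add_integral (p : ℝ) (T : ℕ) :
    ∑ l ∈ Icc 1 T, (l : ℝ) ^ p ≤ 1 + ∫ x in (1 : ℝ)..T + 1, x ^ p := by
  rcases le_total p 0 with hp | hp
  · rcases Nat.eq_zero_or_pos T with rfl | hT
    · simp
    have hT' : (1 : ℝ) ≤ T := by exact_mod_cast hT
    have hanti : AntitoneOn (fun x : ℝ => x ^ p) (Set.Icc (1 : ℕ) T) := fun x hx y _ hxy =>
      rpow_le_rpow_of_nonpos (by push_cast at hx; linarith [hx.1]) hxy hp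
    calc ∑ l ∈ Icc 1 T, (l : ℝ) ^ p ≤ 1 + ∫ x in (1 : ℝ)..T, x ^ p := by
          simpa using hanti.sum_Icc_le_add_integral hT
      _ ≤ 1 + ∫ x in (1 : ℝ)..T + 1, x ^ p := by
          gcongr 1 + ?_
          have hint : IntervalIntegrable (fun x : ℝ => x ^ p) MeasureTheory.volume 1 (T + 1) :=
            intervalIntegral.intervalIntegrable_rpow
              (Or.inr (Set.notMem_uIcc_of_lt one_pos (by linarith)))
          refine intervalIntegral.integral_mono_interval le_rfl hT' (by linarith) ?_ hint
          exact MeasureTheory.ae_restrict_of_forall_mem measurableSet_Ioc fun x hx =>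
            rpow_nonneg (by linarith [hx.1]) p
  · have hmono : MonotoneOn (fun x : ℝ => x ^ p) (Set.Icc (1 : ℕ) (T + 1 : ℕ)) :=
      fun x hx y _ hxy => rpow_le_rpow (by push_cast at hx; linarith [hx.1]) hxy hp
    have := hmono.sum_le_integral_Ico (by omega)
    rw [Ico_add_one_right_eq_Icc] at this
    push_cast at this
    linarith

theorem sum_Icc_rpow_le {p : ℝ} (hp : -1 < p) (T : ℕ) :
    ∑ l ∈ Icc 1 T, (l : ℝ) ^ p ≤ (((T : ℝ) + 1) ^ (p + 1) + p) / (p + 1) := by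
  have hp1 : 0 < p + 1 := by linarith
  calc ∑ l ∈ Icc 1 T, (l : ℝ) ^ p ≤ 1 + ∫ x in (1 : ℝ)..T + 1, x ^ p :=
        sum_Icc_rpow_le_one_add_integral p T
    _ = (((T : ℝ) + 1) ^ (p + 1) + p) / (p + 1) := by
        rw [integral_rpow (Or.inl hp), one_rpow]
        field_simp
        ring

theorem exp_neg_mul_sum_le {η : ℕ → ℝ} {m κ : ℝ} {t T : ℕ} (hm : 0 ≤ m) (hκ : 0 ≤ κ)
    (ht : 1 ≤ t) (htT : t ≤ T) (hη : ∀ u ∈ Icc (t + 1) T, m / u ≤ η u) :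
    exp (-κ * ∑ u ∈ Icc (t + 1) T, η u) ≤
      exp (κ * m) * (t : ℝ) ^ (κ * m) / ((T : ℝ) + 1) ^ (κ * m) := by
  have hsum : m * (log (T + 1) - log t - 1) ≤ ∑ u ∈ Icc (t + 1) T, η u :=
    calc m * (log (T + 1) - log t - 1) ≤ m * ∑ u ∈ Icc (t + 1) T, (u : ℝ)⁻¹ := by
          gcongr
          exact log_sub_log_sub_one_le_sum_Icc_inv ht htT
      _ = ∑ u ∈ Icc (t + 1) T, m / u := by simp only [mul_sum, div_eq_mul_inv]
      _ ≤ ∑ u ∈ Icc (t + 1) T, η u := sum_le_sum hη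
  have ht' : (0 : ℝ) < t := by exact_mod_cast ht
  calc exp (-κ * ∑ u ∈ Icc (t + 1) T, η u) ≤ exp (-κ * (m * (log (T + 1) - log t - 1))) := by
        gcongr exp ?_
        nlinarith
    _ = exp (κ * m) * (t : ℝ) ^ (κ * m) / ((T : ℝ) + 1) ^ (κ * m) := by
        rw [rpow_def_of_pos ht', rpow_def_of_pos (by positivity), ← exp_add, ← exp_sub]
        ring_nf

theorem sq_mul_exp_neg_mul_sum_le {η : ℕ → ℝ} {m M κ : ℝ} {t T : ℕ} (hm : 0 ≤ m) (hκ : 0 ≤ κ)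
    (ht : 1 ≤ t) (htT : t ≤ T) (hη₀ : 0 ≤ η t) (hηM : η t ≤ M / t)
    (hη : ∀ u ∈ Icc (t + 1) T, m / u ≤ η u) :
    η t ^ 2 * exp (-κ * ∑ u ∈ Icc (t + 1) T, η u) ≤
      M ^ 2 * exp (κ * m) / ((T : ℝ) + 1) ^ (κ * m) * (t : ℝ) ^ (κ * m - 2) := by
  have ht' : (0 : ℝ) < t := by exact_mod_cast ht
  calc η t ^ 2 * exp (-κ * ∑ u ∈ Icc (t + 1) T, η u)
      ≤ (M / t) ^ 2 * (exp (κ * m) * (t : ℝ) ^ (κ * m) / ((T : ℝ) + 1) ^ (κ * m)) := by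
        gcongr
        exact exp_neg_mul_sum_le hm hκ ht htT hη
    _ = M ^ 2 * exp (κ * m) / ((T : ℝ) + 1) ^ (κ * m) * (t : ℝ) ^ (κ * m - 2) := by
        rw [rpow_sub ht', rpow_two]
        field_simp

theorem stmt_9_general (η : ℕ → ℝ) (m M τ μ : ℝ) (T : ℕ)
    (hm : 0 < m) (hτ : 0 < τ) (hμ : 0 < μ)
    (hband : ∀ t ∈ Icc 1 T, m / t ≤ η t ∧ η t ≤ M / t)
    (hc : 1 < τ * μ * m) :
    ∑ t ∈ Icc 1 T, η t ^ 2 * Real.exp (-τ * μ * ∑ u ∈ Icc (t + 1) T, η u) ≤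
      M ^ 2 * Real.exp (τ * μ * m) / (τ * μ * m - 1) *
        ((((T : ℝ) + 1) ^ (τ * μ * m - 1) + τ * μ * m - 2) / ((T : ℝ) + 1) ^ (τ * μ * m)) := by
  set c := τ * μ * m
  have hterm : ∀ t ∈ Icc 1 T, η t ^ 2 * exp (-τ * μ * ∑ u ∈ Icc (t + 1) T, η u) ≤
      M ^ 2 * exp c / ((T : ℝ) + 1) ^ c * (t : ℝ) ^ (c - 2) := by
    intro t ht
    obtain ⟨ht1, htT⟩ := mem_Icc.1 ht
    rw [neg_mul τ μ]
    exact sq_mul_exp_neg_mul_sum_le hm.le (by positivity) ht1 htT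
      (le_trans (by positivity) (hband t ht).1) (hband t ht).2
      fun u hu => (hband u (Icc_subset_Icc_left (by omega) hu)).1
  have hpowers :
      ∑ t ∈ Icc 1 T, (t : ℝ) ^ (c - 2) ≤ (((T : ℝ) + 1) ^ (c - 1) + c - 2) / (c - 1) := by
    have := sum_Icc_rpow_le (p := c - 2) (by linarith) T
    rwa [show c - 2 + 1 = c - 1 by ring, ← add_sub_assoc] at this
  calc ∑ t ∈ Icc 1 T, η t ^ 2 * exp (-τ * μ * ∑ u ∈ Icc (t + 1) T, η u)
      ≤ M ^ 2 * exp c / ((T : ℝ) + 1) ^ c * ∑ t ∈ Icc 1 T, (t : ℝ) ^ (c - 2) := by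
        rw [mul_sum]
        exact sum_le_sum hterm
    _ ≤ M ^ 2 * exp c / ((T : ℝ) + 1) ^ c * ((((T : ℝ) + 1) ^ (c - 1) + c - 2) / (c - 1)) := by
        gcongr
    _ = _ := by ring

theorem stmt_9 (η : ℕ → ℝ) (m M τ μ : ℝ) (T : ℕ) (hT : 1 ≤ T)
    (hm : 0 < m) (hmM : m ≤ M) (hτ : 0 < τ) (hμ : 0 < μ)
    (hband : ∀ t ∈ Icc 1 T, m / t ≤ η t ∧ η t ≤ M / t)
    (hc : 1 < τ * μ * m) :
    ∑ t ∈ Icc 1 T, η t ^ 2 * Real.exp (-τ * μ * ∑ u ∈ Icc (t + 1) T, η u) ≤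
      M ^ 2 * Real.exp (τ * μ * m) / (τ * μ * m - 1) *
        ((((T : ℝ) + 1) ^ (τ * μ * m - 1) + τ * μ * m - 2) / ((T : ℝ) + 1) ^ (τ * μ * m)) :=
  stmt_9_general η m M τ μ T hm hτ hμ hband hc
end

section
/- Suppose real numbers (η_t) satisfy m/t ≤ η_t ≤ M/t for 1 ≤ t ≤ T with τμm = 1 for constants τ, μ, m, M > 0. Then Σ_{t=1}^{T} η_t² exp(-τμ Σ_{u=t+1}^{T} η_u) ≤ M² exp(1) (ln(T) + 1)/(T+1). -/
/-!
Since `τμ η_u ≥ τμ m / u = 1 / u`, the exponent of the `t`-th term is at most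
`-(H_T - H_t) ≤ 1 + log t - log (T + 1)`, using `log (T + 1) ≤ H_T` and `H_t ≤ 1 + log t`.
So the `t`-th term is at most `(M / t)² · e t / (T + 1) = M² e / (T + 1) · 1 / t`, and summing
over `t` leaves `H_T ≤ log T + 1`.
-/

open Finset Real

lemma harmonic_add_sum_Icc_inv {t T : ℕ} (h : t ≤ T) :
    (harmonic t : ℝ) + ∑ u ∈ Icc (t + 1) T, (u : ℝ)⁻¹ = harmonic T := by
  simp only [harmonic_eq_sum_Icc, Rat.cast_sum, Rat.cast_inv, Rat.cast_natCast]
  simpa only [← Icc_add_one_left_eq_Ioc, zero_add] using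
    sum_Ioc_consecutive (fun u : ℕ => (u : ℝ)⁻¹) (Nat.zero_le t) h

lemma log_add_one_sub_log_sub_one_le_sum_Icc_inv {t T : ℕ} (h : t ≤ T) :
    log ((T : ℝ) + 1) - log t - 1 ≤ ∑ u ∈ Icc (t + 1) T, (u : ℝ)⁻¹ := by
  have hT := log_add_one_le_harmonic T
  have ht := harmonic_le_one_add_log t
  rw [← harmonic_add_sum_Icc_inv h] at hT
  push_cast at hT
  linarith

lemma exp_neg_mul_sum_Icc_le {η : ℕ → ℝ} {c m : ℝ} {t T : ℕ} (hc₀ : 0 ≤ c) (hcm : c * m = 1)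
    (ht : 1 ≤ t) (htT : t ≤ T) (hη : ∀ u ∈ Icc (t + 1) T, m / u ≤ η u) :
    exp (-c * ∑ u ∈ Icc (t + 1) T, η u) ≤ exp 1 * t / ((T : ℝ) + 1) := by
  have hharmonic : ∑ u ∈ Icc (t + 1) T, (u : ℝ)⁻¹ ≤ c * ∑ u ∈ Icc (t + 1) T, η u := by
    rw [mul_sum]
    refine sum_le_sum fun u hu => ?_
    calc (u : ℝ)⁻¹ = c * (m / u) := by rw [mul_div_assoc', hcm, one_div]
      _ ≤ c * η u := mul_le_mul_of_nonneg_left (hη u hu) hc₀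
  have ht₀ : (0 : ℝ) < t := by exact_mod_cast ht
  calc exp (-c * ∑ u ∈ Icc (t + 1) T, η u) ≤ exp (1 + log t - log ((T : ℝ) + 1)) := by
        gcongr
        linarith [log_add_one_sub_log_sub_one_le_sum_Icc_inv htT]
    _ = exp 1 * t / ((T : ℝ) + 1) := by
        rw [exp_sub, exp_add, exp_log ht₀, exp_log (by positivity)]

lemma sq_mul_exp_neg_mul_sum_Icc_le {η : ℕ → ℝ} {c m M : ℝ} {t T : ℕ} (hm : 0 < m)
    (hcm : c * m = 1) (hband : ∀ t ∈ Icc 1 T, m / t ≤ η t ∧ η t ≤ M / t) (ht : t ∈ Icc 1 T) :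
    η t ^ 2 * exp (-c * ∑ u ∈ Icc (t + 1) T, η u) ≤ M ^ 2 * exp 1 / ((T : ℝ) + 1) * (t : ℝ)⁻¹ := by
  obtain ⟨ht₁, htT⟩ := mem_Icc.mp ht
  have ht₀ : (0 : ℝ) < t := by exact_mod_cast ht₁
  have hc₀ : 0 ≤ c := by rw [eq_inv_of_mul_eq_one_left hcm]; positivity
  have hηt : 0 ≤ η t := (div_pos hm ht₀).le.trans (hband t ht).1
  have hexp := exp_neg_mul_sum_Icc_le hc₀ hcm ht₁ htT fun u hu =>
    (hband u (Icc_subset_Icc (by omega) le_rfl hu)).1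
  calc η t ^ 2 * exp (-c * ∑ u ∈ Icc (t + 1) T, η u)
      ≤ (M / t) ^ 2 * (exp 1 * t / ((T : ℝ) + 1)) := by
        gcongr
        exact (hband t ht).2
    _ = M ^ 2 * exp 1 / ((T : ℝ) + 1) * (t : ℝ)⁻¹ := by
        field_simp

theorem stmt_10_general (η : ℕ → ℝ) (m M τ μ : ℝ) (T : ℕ)
    (hm : 0 < m)
    (hband : ∀ t ∈ Icc 1 T, m / t ≤ η t ∧ η t ≤ M / t)
    (hc : τ * μ * m = 1) :
    ∑ t ∈ Icc 1 T, η t ^ 2 * Real.exp (-τ * μ * ∑ u ∈ Icc (t + 1) T, η u) ≤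
      M ^ 2 * Real.exp 1 * (Real.log T + 1) / ((T : ℝ) + 1) := by
  have hharmonic : ∑ t ∈ Icc 1 T, (t : ℝ)⁻¹ ≤ log T + 1 := by
    have := harmonic_le_one_add_log T
    rw [harmonic_eq_sum_Icc] at this
    push_cast at this
    linarith
  calc ∑ t ∈ Icc 1 T, η t ^ 2 * exp (-τ * μ * ∑ u ∈ Icc (t + 1) T, η u)
      ≤ ∑ t ∈ Icc 1 T, M ^ 2 * exp 1 / ((T : ℝ) + 1) * (t : ℝ)⁻¹ :=
        sum_le_sum fun t ht => by
          rw [neg_mul τ μ]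
          exact sq_mul_exp_neg_mul_sum_Icc_le hm hc hband ht
    _ = M ^ 2 * exp 1 / ((T : ℝ) + 1) * ∑ t ∈ Icc 1 T, (t : ℝ)⁻¹ := by rw [mul_sum]
    _ ≤ M ^ 2 * exp 1 / ((T : ℝ) + 1) * (log T + 1) := by gcongr
    _ = M ^ 2 * exp 1 * (log T + 1) / ((T : ℝ) + 1) := by ring

theorem stmt_10 (η : ℕ → ℝ) (m M τ μ : ℝ) (T : ℕ) (hT : 1 ≤ T)
    (hm : 0 < m) (hM : 0 < M) (hτ : 0 < τ) (hμ : 0 < μ)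
    (hband : ∀ t ∈ Icc 1 T, m / t ≤ η t ∧ η t ≤ M / t)
    (hc : τ * μ * m = 1) :
    ∑ t ∈ Icc 1 T, η t ^ 2 * Real.exp (-τ * μ * ∑ u ∈ Icc (t + 1) T, η u) ≤
      M ^ 2 * Real.exp 1 * (Real.log T + 1) / ((T : ℝ) + 1) :=
  stmt_10_general η m M τ μ T hm hband hc
end

section
/- Let δ : [1, ∞) → (0, ∞) be differentiable with δ'(l) ≤ 0, fix t ≥ 1, constants c, c₁ > 0 with c₁ < c, and T_M ∈ [1, t]. Suppose -δ'(l) ≤ c₁ δ(l)² for all l ≥ T_M. Then c ∫_{T_M}^{t+1} δ(l)² exp(-c ∫_{l}^{t+1} δ(u) du) dl ≤ δ(t+1) - δ(T_M) exp(-c ∫_{T_M}^{t+1} δ(u) du) + c₁ ∫_{T_M}^{t+1} δ(l)² exp(-c ∫_{l}^{t+1} δ(u) du) dl, and hence ∫_{T_M}^{t+1} δ(l)² exp(-c ∫_{l}^{t+1} δ(u) du) dl ≤ δ(t+1)/(c - c₁). -/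
/-!
With `E l = exp (-c ∫_l^b δ)` one has `E' = c δ E`, so `F = δ E` satisfies
`F' = (δ' + c δ²) E ≥ (c - c₁) δ² E` by the hypothesis `-δ' ≤ c₁ δ²`. Integrating this
inequality over `[T_M, t + 1]`, where `E (t + 1) = 1`, gives both estimates.
-/

open MeasureTheory intervalIntegral Set

section

variable {f f' : ℝ → ℝ} {a b x : ℝ}

theorem hasDerivAt_integral_left_of_mem_Ioo (hf : ContinuousOn f (Icc a b)) (hx : x ∈ Ioo a b) :
    HasDerivAt (fun l => ∫ u in l..b, f u) (-f x) x := by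
  have hsub : uIcc x b ⊆ Icc a b :=
    uIcc_subset_Icc (Ioo_subset_Icc_self hx) (right_mem_Icc.2 (hx.1.trans hx.2).le)
  exact integral_hasDerivAt_left (hf.mono hsub).intervalIntegrable
    ((hf.mono Ioo_subset_Icc_self).stronglyMeasurableAtFilter isOpen_Ioo x hx)
    (hf.continuousAt (Icc_mem_nhds hx.1 hx.2))

theorem continuousOn_exp_integral_left (hab : a ≤ b) (hf : ContinuousOn f (Icc a b)) (c : ℝ) :
    ContinuousOn (fun l => Real.exp (-c * ∫ u in l..b, f u)) (Icc a b) := by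
  have hprim := continuousOn_primitive_interval_left (f := f) (μ := volume) (a := a) (b := b)
    (by rw [uIcc_of_le hab]; exact hf.integrableOn_Icc)
  rw [uIcc_of_le hab] at hprim
  exact (hprim.const_smul (-c)).rexp

theorem hasDerivAt_mul_exp_integral_left (hf : ContinuousOn f (Icc a b))
    (hx : x ∈ Ioo a b) (hf' : HasDerivAt f (f' x) x) (c : ℝ) :
    HasDerivAt (fun l => f l * Real.exp (-c * ∫ u in l..b, f u))
      ((f' x + c * f x ^ 2) * Real.exp (-c * ∫ u in x..b, f u)) x := by
  have hexp := ((hasDerivAt_integral_left_of_mem_Ioo hf hx).const_mul (-c)).exp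
  exact (hf'.fun_mul hexp).congr_deriv (by ring)

theorem sub_mul_integral_sq_mul_exp_integral_le (hab : a ≤ b) (hf : ContinuousOn f (Icc a b))
    (hderiv : ∀ x ∈ Ioo a b, HasDerivAt f (f' x) x) {c k : ℝ}
    (hineq : ∀ x ∈ Ioo a b, -f' x ≤ k * f x ^ 2) :
    (c - k) * ∫ l in a..b, f l ^ 2 * Real.exp (-c * ∫ u in l..b, f u) ≤
      f b - f a * Real.exp (-c * ∫ u in a..b, f u) := by
  have hE := continuousOn_exp_integral_left hab hf c
  have hFTC := integral_le_sub_of_hasDeriv_right_of_le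
    (g := fun l => f l * Real.exp (-c * ∫ u in l..b, f u))
    (φ := fun l => (c - k) * (f l ^ 2 * Real.exp (-c * ∫ u in l..b, f u))) hab (hf.mul hE)
    (fun x hx => (hasDerivAt_mul_exp_integral_left hf hx (hderiv x hx) c).hasDerivWithinAt)
    ((continuousOn_const.mul ((hf.pow 2).mul hE)).integrableOn_Icc) fun x hx => by
      rw [← mul_assoc]
      exact mul_le_mul_of_nonneg_right (by linarith [hineq x hx]) (Real.exp_pos _).le
  simpa [intervalIntegral.integral_const_mul] using hFTC

end

theorem stmt_14_general (δ δ' : ℝ → ℝ) (t c c₁ T_M : ℝ)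
    (hderiv : ∀ l : ℝ, 1 ≤ l → HasDerivAt δ (δ' l) l)
    (hpos : ∀ l : ℝ, 1 ≤ l → 0 < δ l)
    (hc : c₁ < c)
    (hTM : 1 ≤ T_M) (hTMt : T_M ≤ t)
    (hineq : ∀ l : ℝ, T_M ≤ l → -δ' l ≤ c₁ * δ l ^ 2) :
    c * ∫ l in T_M..(t + 1), δ l ^ 2 * Real.exp (-c * ∫ u in l..(t + 1), δ u) ≤
        δ (t + 1) - δ T_M * Real.exp (-c * ∫ u in T_M..(t + 1), δ u) +
          c₁ * ∫ l in T_M..(t + 1), δ l ^ 2 * Real.exp (-c * ∫ u in l..(t + 1), δ u) ∧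
      (∫ l in T_M..(t + 1), δ l ^ 2 * Real.exp (-c * ∫ u in l..(t + 1), δ u)) ≤
        δ (t + 1) / (c - c₁) := by
  have key := sub_mul_integral_sq_mul_exp_integral_le (c := c) (by linarith : T_M ≤ t + 1)
    (fun x hx => (hderiv x (hTM.trans hx.1)).continuousAt.continuousWithinAt)
    (fun x hx => hderiv x (hTM.trans hx.1.le)) (fun x hx => hineq x hx.1.le)
  have hinit : 0 ≤ δ T_M * Real.exp (-c * ∫ u in T_M..(t + 1), δ u) :=
    (mul_pos (hpos T_M hTM) (Real.exp_pos _)).le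
  refine ⟨by linarith, ?_⟩
  rw [le_div_iff₀ (sub_pos.2 hc), mul_comm]
  linarith

theorem stmt_14 (δ δ' : ℝ → ℝ) (t c c₁ T_M : ℝ)
    (hderiv : ∀ l : ℝ, 1 ≤ l → HasDerivAt δ (δ' l) l)
    (hpos : ∀ l : ℝ, 1 ≤ l → 0 < δ l)
    (hdec : ∀ l : ℝ, 1 ≤ l → δ' l ≤ 0)
    (ht : 1 ≤ t) (hc₁ : 0 < c₁) (hc : c₁ < c) (hcpos : 0 < c)
    (hTM : 1 ≤ T_M) (hTMt : T_M ≤ t)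
    (hineq : ∀ l : ℝ, T_M ≤ l → -δ' l ≤ c₁ * δ l ^ 2) :
    c * ∫ l in T_M..(t + 1), δ l ^ 2 * Real.exp (-c * ∫ u in l..(t + 1), δ u) ≤
        δ (t + 1) - δ T_M * Real.exp (-c * ∫ u in T_M..(t + 1), δ u) +
          c₁ * ∫ l in T_M..(t + 1), δ l ^ 2 * Real.exp (-c * ∫ u in l..(t + 1), δ u) ∧
      (∫ l in T_M..(t + 1), δ l ^ 2 * Real.exp (-c * ∫ u in l..(t + 1), δ u)) ≤
        δ (t + 1) / (c - c₁) :=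
  stmt_14_general δ δ' t c c₁ T_M hderiv hpos hc hTM hTMt hineq
end
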